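/- arXiv:2308.08944 — 7 statements merged into one kernel-verified Lean document; each statement's English description precedes it below -/
import Mathlib

section
/- A graph that admits a perfect elimination ordering of its vertices is chordal, i.e., it contains no induced cycle of length at least 4. -/
/-!
If the vertices are eliminated along a perfect elimination ordering, the neighbours of the
latest vertex of any finite vertex set that lie in the set are pairwise adjacent. In an
induced cycle of length at least 4, however, the two neighbours of every vertex on the cycle
are distinct and non-adjacent; applied to the vertex set of the cycle, this is a contradiction.
-/

namespace SimpleGraph

variable {V W ι : Type*} {G : SimpleGraph V} {H : SimpleGraph W}

theorem Embedding.isClique_image_iff (f : G ↪g H) {s : Set V} :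
    H.IsClique (f '' s) ↔ G.IsClique s := by
  rw [IsClique, f.injective.injOn.pairwise_image]
  exact ⟨fun h _ ha _ hb hab => f.map_adj_iff.mp (h ha hb hab),
    fun h _ ha _ hb hab => f.map_adj_iff.mpr (h ha hb hab)⟩

theorem exists_isClique_adj_of_perfectEliminationOrder [LinearOrder ι] (e : ι ≃ V)
    (hpeo : ∀ i, G.IsClique {v | G.Adj v (e i) ∧ ∃ j, j < i ∧ v = e j})
    {s : Set V} (hs : s.Finite) (hne : s.Nonempty) :
    ∃ v ∈ s, G.IsClique {u | u ∈ s ∧ G.Adj u v} := by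
  obtain ⟨v, hv, hmax⟩ := Set.exists_max_image s e.symm hs hne
  refine ⟨v, hv, (hpeo (e.symm v)).subset ?_⟩
  rintro u ⟨hu, huv⟩
  refine ⟨by simpa using huv, e.symm u, ?_, by simp⟩
  exact (hmax u hu).lt_of_ne fun h => huv.ne (e.symm.injective h)

open Fin.CommRing in
theorem not_isClique_neighborSet_cycleGraph {m : ℕ} (hm : 4 ≤ m) (k : Fin m) :
    ¬ (cycleGraph m).IsClique ((cycleGraph m).neighborSet k) := by
  obtain ⟨n, rfl⟩ : ∃ n, m = n + 2 + 2 := ⟨m - 4, by omega⟩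
  have h1 : (1 : Fin (n + 2 + 2)) ≠ 0 := by simp
  have h2 : (2 : Fin (n + 2 + 2)) ≠ 0 := by simp [Fin.ext_iff, Nat.mod_eq_of_lt]
  have h3 : (3 : Fin (n + 2 + 2)) ≠ 0 := by simp [Fin.ext_iff, Nat.mod_eq_of_lt]
  rw [cycleGraph_neighborSet, isClique_pair, cycleGraph_adj]
  push Not
  exact ⟨fun h => h2 (by linear_combination -h), fun h => h3 (by linear_combination -h),
    fun h => h1 (by linear_combination h)⟩

end SimpleGraph

/-- A graph admitting a perfect elimination ordering of its vertices is chordal,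
i.e. it contains no induced cycle of length at least 4 (an induced cycle of length
`m` being an embedding of the cycle graph on `m` vertices). -/
theorem stmt1 {n : ℕ} (H : SimpleGraph (Fin n)) (e : Equiv.Perm (Fin n))
    (hpeo : ∀ i : Fin n, H.IsClique {v | H.Adj v (e i) ∧ ∃ j, j < i ∧ v = e j}) :
    ∀ m : ℕ, 4 ≤ m → IsEmpty (SimpleGraph.cycleGraph m ↪g H) := by
  intro m hm
  refine ⟨fun f => ?_⟩
  have : Nonempty (Fin m) := ⟨⟨0, by omega⟩⟩
  obtain ⟨_, ⟨k, rfl⟩, hk⟩ := SimpleGraph.exists_isClique_adj_of_perfectEliminationOrder e hpeo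
    (Set.finite_range f) (Set.range_nonempty f)
  refine SimpleGraph.not_isClique_neighborSet_cycleGraph hm k
    (f.isClique_image_iff.mp (hk.subset ?_))
  rintro _ ⟨a, ha, rfl⟩
  exact ⟨⟨a, rfl⟩, f.map_adj_iff.mpr ha.symm⟩
end

section
/- For every constant p ∈ (0,1), the equation γ·ln(2/γ) + (2−γ)·ln(2/(2−γ)) = (2−γ)·ln(1/(1−p)) − (1−γ)·ln(1/p) has a unique solution γ in the open interval (max{1, 2p}, 2). -/
/-!
Moving everything to one side, the equation says `gap p γ = 0`. The
derivative `log ((2 - γ) p / (γ (1 - p)))` is negative exactly when `γ > 2p`, so `gap p` is strictly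
decreasing on `[max 1 (2p), 2]`. It is positive at the left endpoint (`2 log 2 + log (1 - p)` at
`1` when `2p ≤ 1`, and `-log p` at `2p`) and equals `log p < 0` at `2`, so it has exactly one zero
in between.
-/

open Real Set

theorem existsUnique_mem_Ioo_eq_zero_of_strictAntiOn {f : ℝ → ℝ} {a b : ℝ} (hab : a ≤ b)
    (hf : StrictAntiOn f (Icc a b)) (hcont : ContinuousOn f (Icc a b))
    (ha : 0 < f a) (hb : f b < 0) : ∃! x, x ∈ Ioo a b ∧ f x = 0 := by
  obtain ⟨c, hc, hfc⟩ := intermediate_value_Icc' hab hcont ⟨hb.le, ha.le⟩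
  have hca : c ≠ a := by rintro rfl; linarith
  have hcb : c ≠ b := by rintro rfl; linarith
  refine ⟨c, ⟨⟨hc.1.lt_of_ne hca.symm, hc.2.lt_of_ne hcb⟩, hfc⟩, ?_⟩
  rintro x ⟨hx, hfx⟩
  exact hf.injOn (Ioo_subset_Icc_self hx) hc (hfx.trans hfc.symm)

noncomputable def gap (p γ : ℝ) : ℝ :=
  2 * log 2 - γ * log γ - (2 - γ) * log (2 - γ) + (2 - γ) * log (1 - p) - (1 - γ) * log p

theorem sub_eq_gap (p : ℝ) {γ : ℝ} (hγ0 : γ ≠ 0) (hγ2 : γ ≠ 2) :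
    γ * log (2 / γ) + (2 - γ) * log (2 / (2 - γ)) -
      ((2 - γ) * log (1 / (1 - p)) - (1 - γ) * log (1 / p)) = gap p γ := by
  rw [log_div two_ne_zero hγ0, log_div two_ne_zero (sub_ne_zero.2 hγ2.symm),
    one_div, one_div, log_inv, log_inv, gap]
  ring

theorem continuous_gap (p : ℝ) : Continuous (gap p) := by
  unfold gap
  have := continuous_mul_log
  fun_prop

theorem hasDerivAt_gap (p : ℝ) {x : ℝ} (hx0 : x ≠ 0) (hx2 : x ≠ 2) :
    HasDerivAt (gap p) (log (2 - x) - log x + log p - log (1 - p)) x := by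
  have hsub : HasDerivAt (fun y : ℝ => 2 - y) (-1) x := by
    simpa using (hasDerivAt_id x).const_sub 2
  have hmirror : HasDerivAt (fun y : ℝ => (2 - y) * log (2 - y)) ((log (2 - x) + 1) * (-1)) x :=
    (hasDerivAt_mul_log (sub_ne_zero.2 hx2.symm)).comp x hsub
  exact (((((hasDerivAt_const x (2 * log 2)).sub (hasDerivAt_mul_log hx0)).sub hmirror).add
    (hsub.mul_const (log (1 - p)))).sub
      (((hasDerivAt_id' x).const_sub 1).mul_const (log p))).congr_deriv (by ring)

theorem strictAntiOn_gap {p : ℝ} (hp0 : 0 < p) (hp1 : p < 1) :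
    StrictAntiOn (gap p) (Icc (2 * p) 2) := by
  refine strictAntiOn_of_deriv_neg (convex_Icc _ _) (continuous_gap p).continuousOn ?_
  intro x hx
  rw [interior_Icc] at hx
  obtain ⟨hpx, hx2⟩ := hx
  have hx0 : 0 < x := by linarith
  rw [(hasDerivAt_gap p hx0.ne' hx2.ne).deriv]
  have hlog : log ((2 - x) * p) < log (x * (1 - p)) :=
    log_lt_log (mul_pos (by linarith) hp0) (by nlinarith)
  rw [log_mul (by linarith) hp0.ne', log_mul hx0.ne' (by linarith)] at hlog
  linarith

theorem gap_two (p : ℝ) : gap p 2 = log p := by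
  norm_num [gap]

theorem gap_one (p : ℝ) : gap p 1 = 2 * log 2 + log (1 - p) := by
  norm_num [gap]

theorem gap_two_mul {p : ℝ} (hp0 : p ≠ 0) (hp1 : p ≠ 1) : gap p (2 * p) = -log p := by
  rw [gap, show 2 - 2 * p = 2 * (1 - p) by ring, log_mul two_ne_zero hp0,
    log_mul two_ne_zero (sub_ne_zero.2 hp1.symm)]
  ring

theorem gap_max_one_two_mul_pos {p : ℝ} (hp0 : 0 < p) (hp1 : p < 1) :
    0 < gap p (max 1 (2 * p)) := by
  rcases le_total (2 * p) 1 with h | h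
  · rw [max_eq_left h, gap_one]
    have : log (1 / 2) ≤ log (1 - p) := log_le_log (by norm_num) (by linarith)
    rw [one_div, log_inv] at this
    linarith [log_pos one_lt_two]
  · rw [max_eq_right h, gap_two_mul hp0.ne' hp1.ne]
    linarith [log_neg hp0 hp1]

/-- For every constant `p ∈ (0,1)`, the equation
`γ ln(2/γ) + (2-γ) ln(2/(2-γ)) = (2-γ) ln(1/(1-p)) - (1-γ) ln(1/p)`
has a unique solution `γ` in the open interval `(max{1, 2p}, 2)`. -/
theorem stmt3 (p : ℝ) (hp0 : 0 < p) (hp1 : p < 1) :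
    ∃! γ : ℝ, γ ∈ Set.Ioo (max 1 (2 * p)) 2 ∧
      γ * Real.log (2 / γ) + (2 - γ) * Real.log (2 / (2 - γ)) =
        (2 - γ) * Real.log (1 / (1 - p)) - (1 - γ) * Real.log (1 / p) := by
  have hanti : StrictAntiOn (gap p) (Icc (max 1 (2 * p)) 2) :=
    (strictAntiOn_gap hp0 hp1).mono (Icc_subset_Icc_left (le_max_right _ _))
  have hroot := existsUnique_mem_Ioo_eq_zero_of_strictAntiOn
    (max_le one_le_two (by linarith)) hanti
    (continuous_gap p).continuousOn (gap_max_one_two_mul_pos hp0 hp1)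
    ((gap_two p).trans_lt (log_neg hp0 hp1))
  have heqn : ∀ γ ∈ Ioo (max 1 (2 * p)) 2, (γ * log (2 / γ) + (2 - γ) * log (2 / (2 - γ)) =
      (2 - γ) * log (1 / (1 - p)) - (1 - γ) * log (1 / p) ↔ gap p γ = 0) := fun γ hγ => by
    have hγ0 : γ ≠ 0 := (zero_lt_one.trans_le (le_max_left _ _) |>.trans hγ.1).ne'
    rw [← sub_eq_gap p hγ0 hγ.2.ne, sub_eq_zero]
  exact (existsUnique_congr fun γ => and_congr_right (heqn γ)).2 hroot
end

section
/- Let p ∈ (0,1) and let γ ∈ (max{1,2p}, 2) satisfy γ·ln(2/γ) + (2−γ)·ln(2/(2−γ)) = (2−γ)·ln(1/(1−p)) − (1−γ)·ln(1/p). Then log_{1/p}(2/γ) < 1/2. -/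
/-!
Write `τ = γ / 2`. The equation says exactly that the Kullback–Leibler divergence of the
Bernoulli law with parameter `τ` from the one with parameter `p` equals `½ log (1/p)`.
For `t ≥ p` this divergence is strictly increasing in `t`, and at `t = √p` it is
`√p log (1/√p) - (1 - √p) log (1 + √p) < log (1/√p) = ½ log (1/p)`. Hence `τ > √p`, that is
`2 / γ < p ^ (-1/2)`.
-/

open Real Set

/-- The Kullback–Leibler divergence `KL(Ber t ‖ Ber p)`. -/
noncomputable def bernoulliKL (t p : ℝ) : ℝ :=
  t * log (t / p) + (1 - t) * log ((1 - t) / (1 - p))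

lemma mul_log_div_eq {c : ℝ} (hc : c ≠ 0) (x : ℝ) :
    x * log (x / c) = x * log x + x * log c⁻¹ := by
  rcases eq_or_ne x 0 with rfl | hx
  · simp
  · rw [log_div hx hc, log_inv]
    ring

lemma bernoulliKL_eq_sub_binEntropy {p : ℝ} (hp0 : p ≠ 0) (hp1 : p ≠ 1) (t : ℝ) :
    bernoulliKL t p = t * log p⁻¹ + (1 - t) * log (1 - p)⁻¹ - binEntropy t := by
  rw [bernoulliKL, mul_log_div_eq hp0, mul_log_div_eq (sub_ne_zero.mpr hp1.symm), binEntropy,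
    log_inv t, log_inv (1 - t)]
  ring

lemma bernoulliKL_strictMonoOn {p : ℝ} (hp0 : 0 < p) (hp1 : p < 1) :
    StrictMonoOn (bernoulliKL · p) (Icc p 1) := by
  have hfun : (bernoulliKL · p) = fun t ↦ t * log p⁻¹ + (1 - t) * log (1 - p)⁻¹ - binEntropy t :=
    funext (bernoulliKL_eq_sub_binEntropy hp0.ne' hp1.ne)
  rw [hfun]
  refine strictMonoOn_of_deriv_pos (convex_Icc p 1) (by fun_prop) fun t ht ↦ ?_
  rw [interior_Icc] at ht
  have hderiv : HasDerivAt (fun t ↦ t * log p⁻¹ + (1 - t) * log (1 - p)⁻¹ - binEntropy t)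
      (log p⁻¹ - log (1 - p)⁻¹ - (log (1 - t) - log t)) t := by
    have hlin := ((hasDerivAt_id t).mul_const (log p⁻¹)).add
      (((hasDerivAt_id t).const_sub 1).mul_const (log (1 - p)⁻¹))
    exact (hlin.sub (hasDerivAt_binEntropy (by linarith [ht.1]) ht.2.ne)).congr_deriv (by ring)
  rw [hderiv.deriv, log_inv, log_inv]
  have h1 := log_lt_log hp0 ht.1
  have h2 := log_lt_log (by linarith [ht.2]) (by linarith [ht.1] : 1 - t < 1 - p)
  linarith

lemma bernoulliKL_sqrt_lt {p : ℝ} (hp0 : 0 < p) (hp1 : p < 1) :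
    bernoulliKL (√p) p < log (1 / p) / 2 := by
  have hs0 : 0 < √p := sqrt_pos.mpr hp0
  have hs1 : √p < 1 := (sqrt_lt' one_pos).mpr (by rwa [one_pow])
  have hfactor : 1 - p = (1 - √p) * (1 + √p) := by linear_combination mul_self_sqrt hp0.le
  rw [bernoulliKL, sqrt_div_self', hfactor, div_mul_cancel_left₀ (by linarith), one_div,
    one_div, log_inv, log_inv, log_inv, log_sqrt hp0.le]
  have hlog : log √p < log (1 + √p) := log_lt_log hs0 (by linarith)
  rw [log_sqrt hp0.le] at hlog
  linarith [mul_pos (sub_pos.mpr hs1) (sub_pos.mpr hlog)]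

lemma two_mul_bernoulliKL_half {p γ : ℝ} (hp0 : p ≠ 0) (hp1 : p ≠ 1) (hγ0 : γ ≠ 0) (hγ2 : γ ≠ 2) :
    2 * bernoulliKL (γ / 2) p = (2 - γ) * log (1 / (1 - p)) + γ * log (1 / p)
      - (γ * log (2 / γ) + (2 - γ) * log (2 / (2 - γ))) := by
  have hγ' : 2 - γ ≠ 0 := sub_ne_zero.mpr hγ2.symm
  have hp' : 1 - p ≠ 0 := sub_ne_zero.mpr hp1.symm
  rw [bernoulliKL, show 1 - γ / 2 = (2 - γ) / 2 by ring, log_div (by positivity) hp0,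
    log_div hγ0 two_ne_zero, log_div (by positivity) hp', log_div hγ' two_ne_zero,
    log_div two_ne_zero hγ0, log_div two_ne_zero hγ', one_div, one_div, log_inv, log_inv]
  ring

/-- Let `p ∈ (0,1)` and let `γ ∈ (max{1,2p}, 2)` satisfy
`γ ln(2/γ) + (2-γ) ln(2/(2-γ)) = (2-γ) ln(1/(1-p)) - (1-γ) ln(1/p)`.
Then `log_{1/p}(2/γ) < 1/2`. -/
theorem stmt4 (p γ : ℝ) (hp0 : 0 < p) (hp1 : p < 1)
    (hγ : γ ∈ Set.Ioo (max 1 (2 * p)) 2)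
    (heq : γ * Real.log (2 / γ) + (2 - γ) * Real.log (2 / (2 - γ)) =
      (2 - γ) * Real.log (1 / (1 - p)) - (1 - γ) * Real.log (1 / p)) :
    Real.logb (1 / p) (2 / γ) < 1 / 2 := by
  obtain ⟨hγlo, hγ2⟩ := hγ
  have h2p : 2 * p < γ := (le_max_right _ _).trans_lt hγlo
  have hKL : bernoulliKL (γ / 2) p = log (1 / p) / 2 := by
    linarith [two_mul_bernoulliKL_half hp0.ne' hp1.ne (by linarith) hγ2.ne]
  have hsqrt : √p < γ / 2 := by
    by_contra! h
    have hp_le : p ≤ √p := le_sqrt_self_iff.mpr hp1.le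
    have hmono := ((bernoulliKL_strictMonoOn hp0 hp1).le_iff_le ⟨by linarith, by linarith⟩
      ⟨hp_le, sqrt_le_one.mpr hp1.le⟩).mpr h
    linarith [bernoulliKL_sqrt_lt hp0 hp1]
  calc logb (1 / p) (2 / γ) < logb (1 / p) √(1 / p) := by
        refine logb_lt_logb (one_lt_one_div hp0 hp1) (div_pos two_pos (by linarith)) ?_
        rw [one_div, sqrt_inv, ← inv_div]
        exact inv_strictAnti₀ (sqrt_pos.mpr hp0) hsqrt
    _ = 1 / 2 := by
        have : log (1 / p) ≠ 0 := (log_pos (one_lt_one_div hp0 hp1)).ne'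
        rw [logb, log_sqrt (by positivity)]
        field_simp
end

section
/- If H is a connected graph with a perfect elimination ordering v_1 ≺ ... ≺ v_n, then the graph T on V(H) with edge set { {v_i, ν(v_i)} : i ≥ 2, v_i has an outgoing neighbour } is a spanning tree of H. -/
/-!
Each edge of `T` joins some `e i` to its last earlier neighbour `ν i`, so every vertex has at most
one earlier `T`-neighbour; the latest vertex of a cycle would have two, hence `T` is acyclic.
For connectivity, the ends of every edge `e j e i` of `H` with `j < i` are joined in `T` by strong
induction on `i`: either `e j = ν i`, or `e j` and `ν i` are distinct earlier neighbours of `e i`,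
hence adjacent by the elimination property, and `ν i` precedes `e i`.
-/

namespace SimpleGraph

variable {V : Type*} {G G' : SimpleGraph V}

lemma Preconnected.of_adj_reachable (hG : G.Preconnected)
    (h : ∀ ⦃u v⦄, G.Adj u v → G'.Reachable u v) : G'.Preconnected := fun u v => by
  obtain ⟨p⟩ := hG u v
  induction p with
  | nil => rfl
  | cons hadj _ ih => exact (h hadj).trans ih

lemma Connected.of_adj_reachable (hG : G.Connected)
    (h : ∀ ⦃u v⦄, G.Adj u v → G'.Reachable u v) : G'.Connected :=
  (connected_iff G').2 ⟨hG.preconnected.of_adj_reachable h, hG.nonempty⟩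

lemma isAcyclic_of_lower_neighbor_unique {α : Type*} [LinearOrder α] {r : V → α}
    (hr : Function.Injective r)
    (h : ∀ ⦃x y z⦄, G.Adj x y → G.Adj x z → r y < r x → r z < r x → y = z) : G.IsAcyclic := by
  classical
  intro v c hc
  obtain ⟨u, hu, hmax⟩ := c.support.toFinset.exists_max_image r ⟨v, by simp⟩
  rw [List.mem_toFinset] at hu
  obtain ⟨x, y, hxy, hnbr⟩ := Set.ncard_eq_two.1 (hc.ncard_neighborSet_toSubgraph_eq_two hu)
  have lower : ∀ w ∈ c.toSubgraph.neighborSet u, G.Adj u w ∧ r w < r u := fun w hw =>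
    ⟨hw.adj_sub, lt_of_le_of_ne
      (hmax w (List.mem_toFinset.2 ((c.mem_verts_toSubgraph).1 hw.snd_mem)))
      (hr.ne hw.adj_sub.ne.symm)⟩
  obtain ⟨hux, hx⟩ := lower x (by simp [hnbr])
  obtain ⟨huy, hy⟩ := lower y (by simp [hnbr])
  exact hxy (h hux huy hx hy)

end SimpleGraph

namespace PerfectEliminationTree

variable {n : ℕ} {H T : SimpleGraph (Fin n)} {e : Equiv.Perm (Fin n)} {ν : Fin n → Fin n}

lemma adj_of_earlier_neighbors
    (hpeo : ∀ i : Fin n, H.IsClique {v | H.Adj v (e i) ∧ ∃ j, j < i ∧ v = e j})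
    {i j k : Fin n} (hj : j < i) (hk : k < i) (hji : H.Adj (e j) (e i))
    (hki : H.Adj (e k) (e i)) (hjk : j ≠ k) : H.Adj (e j) (e k) :=
  hpeo i ⟨hji, j, hj, rfl⟩ ⟨hki, k, hk, rfl⟩ (e.injective.ne hjk)

variable
    (hν : ∀ i : Fin n, (∃ j, j < i ∧ H.Adj (e j) (e i)) →
      ∃ j, j < i ∧ ν i = e j ∧ H.Adj (e j) (e i) ∧
        ∀ j', j' < i → H.Adj (e j') (e i) → j' ≤ j)
    (hT : ∀ u v, T.Adj u v ↔ u ≠ v ∧ ∃ i : Fin n,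
      (∃ j, j < i ∧ H.Adj (e j) (e i)) ∧
        ((u = e i ∧ v = ν i) ∨ (v = e i ∧ u = ν i)))
include hν hT

lemma le : T ≤ H := by
  intro u v huv
  obtain ⟨-, i, hlower, hedge⟩ := (hT u v).1 huv
  obtain ⟨j, -, hνj, hji, -⟩ := hν i hlower
  rcases hedge with ⟨rfl, rfl⟩ | ⟨rfl, rfl⟩ <;> rw [hνj]
  exacts [hji.symm, hji]

lemma adj_nu {i : Fin n} (hlower : ∃ j, j < i ∧ H.Adj (e j) (e i)) : T.Adj (e i) (ν i) := by
  obtain ⟨j, hj, hνj, -⟩ := hν i hlower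
  refine (hT _ _).2 ⟨?_, i, hlower, Or.inl ⟨rfl, rfl⟩⟩
  rw [hνj]
  exact e.injective.ne hj.ne'

lemma eq_nu_of_adj {u v : Fin n} (huv : T.Adj u v) (hvu : e.symm v < e.symm u) :
    v = ν (e.symm u) := by
  obtain ⟨-, i, hlower, hedge⟩ := (hT u v).1 huv
  obtain ⟨j, hj, hνj, -⟩ := hν i hlower
  rcases hedge with ⟨rfl, rfl⟩ | ⟨rfl, rfl⟩
  · simp
  · rw [hνj, e.symm_apply_apply, e.symm_apply_apply] at hvu
    exact absurd hj hvu.asymm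

lemma reachable_of_adj
    (hpeo : ∀ i : Fin n, H.IsClique {v | H.Adj v (e i) ∧ ∃ j, j < i ∧ v = e j})
    (i : Fin n) : ∀ j, j < i → H.Adj (e j) (e i) → T.Reachable (e j) (e i) := by
  induction i using WellFoundedLT.induction with
  | _ i ih =>
  intro j hj hji
  obtain ⟨k, hk, hνk, hki, hmax⟩ := hν i ⟨j, hj, hji⟩
  have hkT : T.Adj (e k) (e i) := hνk ▸ (adj_nu hν hT ⟨j, hj, hji⟩).symm
  rcases (hmax j hj hji).lt_or_eq with hjk | rfl
  · exact (ih k hk j hjk (adj_of_earlier_neighbors hpeo hj hk hji hki hjk.ne)).trans hkT.reachable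
  · exact hkT.reachable

lemma connected (hconn : H.Connected)
    (hpeo : ∀ i : Fin n, H.IsClique {v | H.Adj v (e i) ∧ ∃ j, j < i ∧ v = e j}) :
    T.Connected := by
  refine hconn.of_adj_reachable fun u v huv => ?_
  obtain ⟨i, rfl⟩ := e.surjective u
  obtain ⟨j, rfl⟩ := e.surjective v
  rcases lt_trichotomy i j with hij | rfl | hji
  · exact reachable_of_adj hν hT hpeo j i hij huv
  · exact absurd rfl huv.ne
  · exact (reachable_of_adj hν hT hpeo i j hji huv.symm).symm

lemma isAcyclic : T.IsAcyclic :=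
  SimpleGraph.isAcyclic_of_lower_neighbor_unique e.symm.injective fun _ _ _ hxy hxz hy hz =>
    (eq_nu_of_adj hν hT hxy hy).trans (eq_nu_of_adj hν hT hxz hz).symm

end PerfectEliminationTree

open PerfectEliminationTree in
/-- If `H` is a connected graph with a perfect elimination ordering `e`, then the
graph `T` on the vertices of `H` with edge set `{{e i, ν i}}` — over all `i` whose
vertex `e i` has an outgoing neighbour, `ν i` being the last outgoing neighbour of
`e i` — is a spanning tree of `H`. -/
theorem stmt8 {n : ℕ} (H : SimpleGraph (Fin n)) (hconn : H.Connected)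
    (e : Equiv.Perm (Fin n))
    (hpeo : ∀ i : Fin n, H.IsClique {v | H.Adj v (e i) ∧ ∃ j, j < i ∧ v = e j})
    (ν : Fin n → Fin n)
    (hν : ∀ i : Fin n, (∃ j, j < i ∧ H.Adj (e j) (e i)) →
      ∃ j, j < i ∧ ν i = e j ∧ H.Adj (e j) (e i) ∧
        ∀ j', j' < i → H.Adj (e j') (e i) → j' ≤ j)
    (T : SimpleGraph (Fin n))
    (hT : ∀ u v, T.Adj u v ↔ u ≠ v ∧ ∃ i : Fin n,
      (∃ j, j < i ∧ H.Adj (e j) (e i)) ∧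
        ((u = e i ∧ v = ν i) ∨ (v = e i ∧ u = ν i))) :
    T.IsTree ∧ T ≤ H :=
  ⟨⟨connected hν hT hconn hpeo, isAcyclic hν hT⟩, le hν hT⟩
end

section
/- Let ℓ ≥ 2 be an integer and j ≥ ℓ. The graph F_j on vertices {0,1,...,j}, where vertex i is adjacent to its min{i, ℓ} immediate predecessors, is strictly 1-balanced: every proper subgraph with at least 2 vertices has 1-density strictly less than the 1-density of F_j. -/
/-- The `ℓ`-th power of a path on `m` vertices: `i ~ j` iff `1 ≤ |i - j| ≤ ℓ`. -/
def pathPower (k m : ℕ) : SimpleGraph (Fin m) :=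
  SimpleGraph.fromRel (fun i j => ((i : ℤ) - (j : ℤ)).natAbs ≤ k)

open Finset

lemma pathPower_adj {k m : ℕ} {a b : Fin m} :
    (pathPower k m).Adj a b ↔ a ≠ b ∧ a.val ≤ b.val + k ∧ b.val ≤ a.val + k := by
  simp only [pathPower, SimpleGraph.fromRel_adj]
  constructor
  · rintro ⟨h1, h2 | h2⟩ <;> refine ⟨h1, ?_⟩ <;> omega
  · rintro ⟨h1, h2⟩; exact ⟨h1, Or.inl (by omega)⟩

open scoped Classical in
lemma pathPower_degree {k m : ℕ} (i : Fin m) :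
    (pathPower k m).degree i = min i.val k + min k (m - 1 - i.val) := by
  classical
  rw [← SimpleGraph.card_neighborFinset_eq_degree]
  have hcard : ((pathPower k m).neighborFinset i).card =
      ((range m).filter fun x => x ≠ i.val ∧ x ≤ i.val + k ∧ i.val ≤ x + k).card := by
    refine Finset.card_bij (fun a _ => (a : ℕ)) ?_ ?_ ?_
    · intro a ha
      simp only [SimpleGraph.mem_neighborFinset, pathPower_adj] at ha
      simp only [mem_filter, mem_range]
      refine ⟨a.isLt, fun h => ha.1.symm (Fin.ext h), by omega, by omega⟩
      -- note adj i a : i ≠ a etc; careful direction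
    · intro a _ b _ h; exact Fin.ext h
    · intro b hb
      simp only [mem_filter, mem_range] at hb
      refine ⟨⟨b, hb.1⟩, ?_, rfl⟩
      simp only [SimpleGraph.mem_neighborFinset, pathPower_adj]
      exact ⟨fun h => hb.2.1 (congrArg Fin.val h.symm), by omega, by omega⟩
  rw [hcard]
  have : ((range m).filter fun x => x ≠ i.val ∧ x ≤ i.val + k ∧ i.val ≤ x + k) =
      Ico (i.val - k) i.val ∪ Ico (i.val + 1) (min (i.val + k + 1) m) := by
    ext x
    simp only [mem_filter, mem_range, mem_union, mem_Ico]
    omega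
  rw [this, Finset.card_union_of_disjoint, Nat.card_Ico, Nat.card_Ico]
  · have := i.isLt; omega
  · rw [Finset.disjoint_left]; intro x hx hy
    simp only [mem_Ico] at hx hy; omega

open scoped Classical in
lemma pathPower_edgeCount (k m : ℕ) :
    (pathPower k m).edgeFinset.card = ∑ i ∈ range m, min i k := by
  classical
  have h2 := SimpleGraph.sum_degrees_eq_twice_card_edges (pathPower k m)
  have hd : ∑ v : Fin m, (pathPower k m).degree v
      = ∑ i ∈ range m, (min i k + min k (m - 1 - i)) := by
    rw [Finset.sum_congr rfl fun (i : Fin m) _ => pathPower_degree (k := k) i]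
    exact Fin.sum_univ_eq_sum_range (fun n => min n k + min k (m - 1 - n)) m
  have hr : ∑ i ∈ range m, min k (m - 1 - i) = ∑ i ∈ range m, min i k := by
    rw [← Finset.sum_range_reflect]
    apply Finset.sum_congr rfl
    intro i hi
    simp only [mem_range] at hi
    omega
  rw [hd, Finset.sum_add_distrib, hr] at h2
  omega

lemma sumA {m k : ℕ} (h : m ≤ k + 1) :
    2 * ∑ i ∈ range m, min i k = m * (m - 1) := by
  have : ∑ i ∈ range m, min i k = ∑ i ∈ range m, i := by
    apply Finset.sum_congr rfl; intro i hi; simp only [mem_range] at hi; omega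
  rw [this, mul_comm, Finset.sum_range_id_mul_two]

lemma sumB {m k : ℕ} (h : k + 1 ≤ m) :
    2 * ∑ i ∈ range m, min i k + k * k + k = 2 * k * m := by
  induction m, h using Nat.le_induction with
  | base =>
      have h := sumA (m := k + 1) (k := k) le_rfl
      rw [Nat.add_sub_cancel] at h
      nlinarith [h]
  | succ m hm ih =>
      rw [Finset.sum_range_succ]
      have : min m k = k := by omega
      rw [this]
      nlinarith [ih]

lemma key_ineq {l v j : ℕ} (hl : 2 ≤ l) (hj : l ≤ j) (hv2 : 2 ≤ v) (hvj : v ≤ j) :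
    (∑ i ∈ range v, min i l) * j < (∑ i ∈ range (j + 1), min i l) * (v - 1) := by
  obtain ⟨w, rfl⟩ : ∃ w, v = w + 1 := ⟨v - 1, by omega⟩
  simp only [Nat.add_sub_cancel]
  set S := ∑ i ∈ range (w + 1), min i l with hS
  set T := ∑ i ∈ range (j + 1), min i l with hT
  have hB : 2 * T + l * l + l = 2 * l * (j + 1) := sumB (by omega)
  have hBr : 2 * l * (j + 1) = 2 * (l * j) + 2 * l := by ring
  have hw1 : 1 ≤ w := by omega
  rcases le_or_gt (w + 1) (l + 1) with hc | hc
  · have hA : 2 * S = (w + 1) * w := by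
      have h := sumA (m := w + 1) (k := l) hc
      rwa [Nat.add_sub_cancel] at h
    have key : (w + 1) * j < 2 * T := by
      rcases lt_or_eq_of_le (show w ≤ l by omega) with hwl | hwl
      · have h1 : (w + 1) * j ≤ l * j := Nat.mul_le_mul_right j (by omega)
        have h2 : l * l ≤ l * j := Nat.mul_le_mul_left l hj
        omega
      · subst hwl
        -- here v = w + 1 = l + 1 ≤ j, so j ≥ w + 1
        have hjw : w + 1 ≤ j := hvj
        have h1 : (w - 1) * (w + 1) ≤ (w - 1) * j := Nat.mul_le_mul_left _ hjw
        have h2 : (w - 1) * (w + 1) + 1 = w * w := by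
          obtain ⟨u, rfl⟩ : ∃ u, w = u + 1 := ⟨w - 1, by omega⟩
          simp only [Nat.add_sub_cancel]
          ring
        have h3 : (w - 1) * j + j = w * j := by
          obtain ⟨u, rfl⟩ : ∃ u, w = u + 1 := ⟨w - 1, by omega⟩
          simp only [Nat.add_sub_cancel]
          ring
        -- (w+1)*j = w*j + j ; need w*j + j + w*w + w < 2*w*(j+1)
        have h4 : (w + 1) * j = w * j + j := by ring
        have h5 : 2 * w * (j + 1) = 2 * (w * j) + 2 * w := by ring
        omega
    have hcalc : S * j * 2 < T * w * 2 := by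
      calc S * j * 2 = w * ((w + 1) * j) := by
            rw [show w * ((w + 1) * j) = (2 * S) * j from by rw [hA]; ring]; ring
      _ < w * (2 * T) := (mul_lt_mul_iff_right₀ (show 0 < w by omega)).mpr key
      _ = T * w * 2 := by ring
    omega
  · have hA : 2 * S + l * l + l = 2 * l * (w + 1) := sumB (m := w + 1) (by omega)
    have hAz : 2 * (S : ℤ) + l * l + l = 2 * l * (w + 1) := by exact_mod_cast hA
    have hBz : 2 * (T : ℤ) + l * l + l = 2 * l * (j + 1) := by exact_mod_cast hB
    have key : 2 * ((T : ℤ) * w) = 2 * ((S : ℤ) * j) + ((j : ℤ) - w) * (l * l - l) := by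
      linear_combination (w : ℤ) * hBz - (j : ℤ) * hAz
    have h1 : (1 : ℤ) ≤ (j : ℤ) - w := by omega
    have h2 : (0 : ℤ) < (l : ℤ) * l - l := by
      have : 2 ≤ l := hl
      nlinarith [this]
    have : (S : ℤ) * j < (T : ℤ) * w := by nlinarith [key, mul_pos (by linarith : (0:ℤ) < (j:ℤ) - w) h2]
    exact_mod_cast this

lemma sm_diff {n N : ℕ} {f : Fin n → Fin N} (hf : StrictMono f) :
    ∀ (d : ℕ) (a b : Fin n), b.val = a.val + d → (f a).val + d ≤ (f b).val := by
  intro d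
  induction d with
  | zero =>
      intro a b h
      rw [show b = a from Fin.ext (by omega)]
      omega
  | succ d ih =>
      intro a b h
      have hb' : a.val + d < n := by have := b.isLt; omega
      have h1 := ih a ⟨a.val + d, hb'⟩ rfl
      have h2 : f ⟨a.val + d, hb'⟩ < f b := hf (by rw [Fin.lt_def]; simp; omega)
      rw [Fin.lt_def] at h2
      omega

open scoped Classical in
lemma subgraph_edge_bound {l m : ℕ} (F' : (pathPower l m).Subgraph)
    (hv : 1 ≤ F'.verts.ncard) :
    F'.edgeSet.ncard ≤ ∑ i ∈ range F'.verts.ncard, min i l := by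
  classical
  set v := F'.verts.ncard with hv'
  have hfin : F'.verts.Finite := Set.toFinite _
  set s : Finset (Fin m) := hfin.toFinset with hs
  have hcard : s.card = v := (Set.ncard_eq_toFinset_card _ hfin).symm
  have hvpos : 0 < v := hv
  set e := s.orderIsoOfFin hcard with he
  set g : Fin v → Fin m := fun t => (e t : Fin m) with hgdef
  have hg : StrictMono g := fun x y h => Subtype.coe_lt_coe.mpr (e.strictMono h)
  set r : Fin m → Fin v := fun a => if h : a ∈ s then e.symm ⟨a, h⟩ else ⟨0, hvpos⟩ with hr
  have hgr : ∀ a (h : a ∈ s), g (r a) = a := by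
    intro a h
    simp only [hr, dif_pos h, hgdef]
    rw [e.apply_symm_apply]
  have hrinj : ∀ a b, a ∈ s → b ∈ s → r a = r b → a = b := by
    intro a b ha hb h
    rw [← hgr a ha, ← hgr b hb, h]
  have hkey : ∀ a b, a ∈ s → b ∈ s → a.val ≤ b.val →
      (r a).val ≤ (r b).val ∧ a.val + (r b).val ≤ b.val + (r a).val := by
    intro a b ha hb hab
    have h1 : (r a).val ≤ (r b).val := by
      by_contra hcon
      push_neg at hcon
      have h2 := hg (Fin.lt_def.mpr hcon)
      rw [hgr a ha, hgr b hb] at h2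
      rw [Fin.lt_def] at h2
      omega
    have h2 := sm_diff hg ((r b).val - (r a).val) (r a) (r b) (by omega)
    rw [hgr a ha, hgr b hb] at h2
    exact ⟨h1, by omega⟩
  have hmem : ∀ {a b : Fin m}, F'.Adj a b → a ∈ s := by
    intro a b h
    rw [hs, hfin.mem_toFinset]
    exact F'.edge_vert h
  have hsub : ∀ x ∈ F'.edgeSet, Sym2.map r x ∈ (pathPower l v).edgeSet := by
    intro x
    induction x using Sym2.ind with
    | _ a b =>
      intro hx
      have hadj : F'.Adj a b := SimpleGraph.Subgraph.mem_edgeSet.mp hx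
      have ha : a ∈ s := hmem hadj
      have hb : b ∈ s := hmem hadj.symm
      have hG := F'.adj_sub hadj
      rw [Sym2.map_pair_eq, SimpleGraph.mem_edgeSet, pathPower_adj]
      rw [pathPower_adj] at hG
      obtain ⟨hne, h1, h2⟩ := hG
      refine ⟨fun hEq => hne (hrinj a b ha hb hEq), ?_, ?_⟩
      · rcases le_total a.val b.val with h | h
        · have := hkey a b ha hb h; omega
        · have := hkey b a hb ha h; omega
      · rcases le_total a.val b.val with h | h
        · have := hkey a b ha hb h; omega
        · have := hkey b a hb ha h; omega
  have hinj : Set.InjOn (Sym2.map r) F'.edgeSet := by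
    have key : ∀ x ∈ F'.edgeSet, ∀ y ∈ F'.edgeSet, Sym2.map r x = Sym2.map r y → x = y := by
      intro x
      induction x using Sym2.ind with
      | _ a b =>
        intro hx y
        induction y using Sym2.ind with
        | _ c d =>
          intro hy h
          have hab : F'.Adj a b := SimpleGraph.Subgraph.mem_edgeSet.mp hx
          have hcd : F'.Adj c d := SimpleGraph.Subgraph.mem_edgeSet.mp hy
          rw [Sym2.map_pair_eq, Sym2.map_pair_eq, Sym2.eq_iff] at h
          rw [Sym2.eq_iff]
          rcases h with ⟨h1, h2⟩ | ⟨h1, h2⟩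
          · exact Or.inl ⟨hrinj a c (hmem hab) (hmem hcd) h1,
              hrinj b d (hmem hab.symm) (hmem hcd.symm) h2⟩
          · exact Or.inr ⟨hrinj a d (hmem hab) (hmem hcd.symm) h1,
              hrinj b c (hmem hab.symm) (hmem hcd) h2⟩
    exact fun x hx y hy h => key x hx y hy h
  calc F'.edgeSet.ncard = (Sym2.map r '' F'.edgeSet).ncard :=
        (Set.ncard_image_of_injOn hinj).symm
  _ ≤ (pathPower l v).edgeSet.ncard := by
        apply Set.ncard_le_ncard _ (Set.toFinite _)
        rintro y ⟨x, hx, rfl⟩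
        exact hsub x hx
  _ = ∑ i ∈ range v, min i l := by
        rw [← SimpleGraph.coe_edgeFinset, Set.ncard_coe_finset]
        exact pathPower_edgeCount l v

/-- Let `ℓ ≥ 2` and `j ≥ ℓ`. The graph `F_j` on `{0, ..., j}` in which vertex `i`
is adjacent to its `min{i, ℓ}` immediate predecessors (the `ℓ`-th power of a path)
is strictly 1-balanced: every proper subgraph with at least 2 vertices has
1-density `|E|/(|V| - 1)` strictly less than that of `F_j`. -/
theorem stmt13 (ℓ j : ℕ) (hℓ : 2 ≤ ℓ) (hj : ℓ ≤ j) :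
    ∀ F' : (pathPower ℓ (j + 1)).Subgraph, F' ≠ ⊤ → 2 ≤ F'.verts.ncard →
      (F'.edgeSet.ncard : ℝ) / (F'.verts.ncard - 1) <
        ((pathPower ℓ (j + 1)).edgeSet.ncard : ℝ) / j := by
  intro F' hne hv2
  classical
  set v := F'.verts.ncard with hv
  have heG : (pathPower ℓ (j + 1)).edgeSet.ncard = ∑ i ∈ range (j + 1), min i ℓ := by
    rw [← SimpleGraph.coe_edgeFinset, Set.ncard_coe_finset]
    exact pathPower_edgeCount ℓ (j + 1)
  have hvle : v ≤ j + 1 := by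
    have h := Set.ncard_le_ncard (Set.subset_univ F'.verts) (Set.toFinite _)
    rwa [Set.ncard_univ, Nat.card_eq_fintype_card, Fintype.card_fin] at h
  have hE := subgraph_edge_bound F' (by omega)
  have hjpos : (0 : ℝ) < (j : ℝ) := by
    have : 0 < j := by omega
    exact_mod_cast this
  have hvpos : (0 : ℝ) < (v : ℝ) - 1 := by
    have : (2 : ℝ) ≤ (v : ℝ) := by exact_mod_cast hv2
    linarith
  rw [div_lt_div_iff₀ hvpos hjpos]
  rcases lt_or_eq_of_le hvle with hvj | hvj
  · have hkey := key_ineq (l := ℓ) (v := v) (j := j) hℓ hj hv2 (by omega)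
    have hnat : F'.edgeSet.ncard * j < (pathPower ℓ (j + 1)).edgeSet.ncard * (v - 1) := by
      calc F'.edgeSet.ncard * j ≤ (∑ i ∈ range v, min i ℓ) * j :=
            Nat.mul_le_mul_right _ hE
      _ < _ := by rw [heG]; exact hkey
    have hcast : ((v : ℝ) - 1) = ((v - 1 : ℕ) : ℝ) := by
      rw [Nat.cast_sub (by omega)]; simp
    rw [hcast]
    exact_mod_cast hnat
  · have hverts : F'.verts = Set.univ := by
      apply Set.eq_of_subset_of_ncard_le (Set.subset_univ _) _ (Set.toFinite _)
      rw [Set.ncard_univ, Nat.card_eq_fintype_card, Fintype.card_fin, ← hv, hvj]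
    have hlt : F'.edgeSet.ncard < (pathPower ℓ (j + 1)).edgeSet.ncard := by
      rcases lt_or_eq_of_le (Set.ncard_le_ncard F'.edgeSet_subset (Set.toFinite _)) with h | h
      · exact h
      · exfalso
        apply hne
        have hEq : F'.edgeSet = (pathPower ℓ (j + 1)).edgeSet :=
          Set.eq_of_subset_of_ncard_le F'.edgeSet_subset (le_of_eq h.symm) (Set.toFinite _)
        apply SimpleGraph.Subgraph.ext
        · rw [hverts]; rfl
        · funext a b
          have : F'.Adj a b ↔ (pathPower ℓ (j + 1)).Adj a b := by
            rw [← SimpleGraph.Subgraph.mem_edgeSet, hEq, SimpleGraph.mem_edgeSet]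
          simp only [this, SimpleGraph.Subgraph.top_adj]
    have hveq : ((v : ℝ) - 1) = (j : ℝ) := by
      rw [hvj]; push_cast; ring
    rw [hveq]
    have : (F'.edgeSet.ncard : ℝ) < ((pathPower ℓ (j + 1)).edgeSet.ncard : ℝ) := by exact_mod_cast hlt
    nlinarith [this, hjpos]
end

section
/- Let ℓ ≥ 3 and α with ℓ−1 < 1/α < ℓ. Define the sequence (x_i) by x_i = i for 1 ≤ i ≤ ℓ, and for i > ℓ let x_i be the maximum integer in [2,ℓ] with (x_1+...+x_i)/i < 1/α. Then x_i ∈ {ℓ−1, ℓ} for all i > ℓ. -/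
/-- Let `ℓ ≥ 3` and `α` with `ℓ - 1 < 1/α < ℓ`. Define the sequence `x` by
`x i = i` for `1 ≤ i ≤ ℓ` and, for `i > ℓ`, `x i` is the maximum integer in
`[2, ℓ]` with `(x 1 + ... + x i) / i < 1/α`. Then `x i ∈ {ℓ - 1, ℓ}` for all
`i > ℓ`. -/
theorem stmt16 (ℓ : ℕ) (hℓ : 3 ≤ ℓ) (α : ℝ)
    (hα1 : (ℓ : ℝ) - 1 < 1 / α) (hα2 : 1 / α < ℓ)
    (x : ℕ → ℕ)
    (hinit : ∀ i : ℕ, 1 ≤ i → i ≤ ℓ → x i = i)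
    (hrec : ∀ i : ℕ, ℓ < i →
      (2 ≤ x i ∧ x i ≤ ℓ ∧ ((∑ t ∈ Finset.Icc 1 i, x t : ℕ) : ℝ) / i < 1 / α) ∧
      (∀ m : ℕ, 2 ≤ m → m ≤ ℓ →
        ((∑ t ∈ Finset.Icc 1 (i - 1), x t : ℕ) + (m : ℝ)) / i < 1 / α → m ≤ x i)) :
    ∀ i : ℕ, ℓ < i → x i = ℓ - 1 ∨ x i = ℓ := by
  intro i hi
  have hℓR : (3 : ℝ) ≤ (ℓ : ℝ) := by exact_mod_cast hℓ
  -- key bound: S_{i-1} < (i-1) * (1/α)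
  have hS : ((∑ t ∈ Finset.Icc 1 (i - 1), x t : ℕ) : ℝ) < ((i : ℝ) - 1) * (1 / α) := by
    rcases eq_or_lt_of_le (Nat.succ_le_of_lt hi) with h | h
    · -- i = ℓ + 1, so i - 1 = ℓ
      have hi1 : i - 1 = ℓ := by omega
      rw [hi1]
      have hsum : ∑ t ∈ Finset.Icc 1 ℓ, x t = ∑ t ∈ Finset.Icc 1 ℓ, t := by
        apply Finset.sum_congr rfl
        intro t ht
        simp only [Finset.mem_Icc] at ht
        exact hinit t ht.1 ht.2
      have hsum2 : ∑ t ∈ Finset.Icc 1 ℓ, t = ∑ t ∈ Finset.range (ℓ + 1), t := by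
        rw [Finset.range_eq_Ico, ← Finset.Ico_add_one_right_eq_Icc]
        rw [Finset.sum_Ico_eq_sum_range, Finset.sum_Ico_eq_sum_range]
        simp only [Nat.succ_sub_one, Nat.sub_zero, zero_add]
        rw [Finset.sum_range_succ']
        simp [add_comm]
      have hg : (∑ t ∈ Finset.range (ℓ + 1), t) * 2 = (ℓ + 1) * ℓ :=
        Finset.sum_range_id_mul_two (ℓ + 1)
      have key : (ℓ + 1) * ℓ ≤ 2 * (ℓ * (ℓ - 1)) := by
        obtain ⟨m, rfl⟩ : ∃ m, ℓ = m + 1 := ⟨ℓ - 1, by omega⟩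
        have hm2 : 2 ≤ m := by omega
        simp only [Nat.add_sub_cancel]
        nlinarith
      have hnat : 2 * (∑ t ∈ Finset.Icc 1 ℓ, x t) ≤ 2 * (ℓ * (ℓ - 1)) := by
        rw [hsum, hsum2]
        calc 2 * (∑ t ∈ Finset.range (ℓ + 1), t)
            = (∑ t ∈ Finset.range (ℓ + 1), t) * 2 := by ring
          _ = (ℓ + 1) * ℓ := hg
          _ ≤ 2 * (ℓ * (ℓ - 1)) := key
      have hR : ((∑ t ∈ Finset.Icc 1 ℓ, x t : ℕ) : ℝ) ≤ (ℓ : ℝ) * ((ℓ : ℝ) - 1) := by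
        have h1 : ((ℓ * (ℓ - 1) : ℕ) : ℝ) = (ℓ : ℝ) * ((ℓ : ℝ) - 1) := by
          have : ((ℓ - 1 : ℕ) : ℝ) = (ℓ : ℝ) - 1 := by
            have : 1 ≤ ℓ := by omega
            push_cast [this]; ring
          push_cast [this]; ring
        rw [← h1]
        exact_mod_cast (by omega : (∑ t ∈ Finset.Icc 1 ℓ, x t) ≤ ℓ * (ℓ - 1))
      have hi1R : ((i : ℝ) - 1) = (ℓ : ℝ) := by
        have : i = ℓ + 1 := by omega
        subst this; push_cast; ring
      rw [hi1R]
      calc ((∑ t ∈ Finset.Icc 1 ℓ, x t : ℕ) : ℝ) ≤ (ℓ : ℝ) * ((ℓ : ℝ) - 1) := hR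
        _ < (ℓ : ℝ) * (1 / α) := by
          apply mul_lt_mul_of_pos_left hα1 (by linarith)
    · -- i - 1 > ℓ
      have h' : ℓ < i - 1 := by omega
      have := ((hrec (i - 1) h').1).2.2
      have hpos : (0 : ℝ) < ((i - 1 : ℕ) : ℝ) := by
        have : 0 < i - 1 := by omega
        exact_mod_cast this
      have h2 := (div_lt_iff₀ hpos).mp this
      have hcast : ((i - 1 : ℕ) : ℝ) = (i : ℝ) - 1 := by
        have : 1 ≤ i := by omega
        push_cast [this]; ring
      rw [hcast] at h2
      linarith
  have hm : (ℓ - 1 : ℕ) ≤ x i := by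
    apply ((hrec i hi).2) (ℓ - 1) (by omega) (by omega)
    have hcast : ((ℓ - 1 : ℕ) : ℝ) = (ℓ : ℝ) - 1 := by
      have : 1 ≤ ℓ := by omega
      push_cast [this]; ring
    rw [hcast]
    have hipos : (0 : ℝ) < (i : ℝ) := by exact_mod_cast (by omega : 0 < i)
    rw [div_lt_iff₀ hipos]
    have : ((i : ℝ) - 1) * (1 / α) + ((ℓ : ℝ) - 1) < (i : ℝ) * (1 / α) := by nlinarith
    linarith
  have hle : x i ≤ ℓ := ((hrec i hi).1).2.1
  omega
end

section
/- If a finite graph G has no clique on s+2 vertices, then every chordal subgraph H of G on n vertices has at most s·n edges. -/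
/-!
A chordal graph has a simplicial vertex in every induced subgraph (Dirac), and in a
`K_{s+2}`-free graph a simplicial vertex has at most `s` neighbours, so deleting simplicial
vertices one at a time removes at most `s` edges per vertex.

Dirac's lemma is proved in the stronger form that a non-complete induced subgraph `W` has two
non-adjacent simplicial vertices, by induction on `W`. Given non-adjacent `v, u ∈ W`, let `C` be
the component of `u` in `W ∖ N[v]` and `S` the vertices of `W ∖ C` with a neighbour in `C`.
Then `S ⊆ N(v)`, and `S` is a clique: two non-adjacent vertices of `S`, joined by a shortest path
through `C` and through `v`, would span an induced cycle of length at least four. Induction on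
`C ∪ S` and on `W ∖ C` yields a simplicial vertex in `C` and one outside `C ∪ S`, because `S`,
being a clique, cannot contain both vertices of a non-adjacent pair.
-/

open Finset

namespace SimpleGraph

variable {V : Type*} {G : SimpleGraph V}

theorem cycleGraph_adj_iff_val {n : ℕ} {i j : Fin (n + 2)} :
    (cycleGraph (n + 2)).Adj i j ↔
      i.val + 1 = j.val ∨ j.val + 1 = i.val ∨
        (i.val = 0 ∧ j.val = n + 1) ∨ (j.val = 0 ∧ i.val = n + 1) := by
  have sub_eq_one : ∀ a b : Fin (n + 2),
      (a - b).val = 1 ↔ a.val = b.val + 1 ∨ (a.val = 0 ∧ b.val = n + 1) := by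
    intro a b
    rcases le_or_gt b a with h | h
    · rw [Fin.sub_val_of_le h]; omega
    · rw [Fin.coe_sub_iff_lt.mpr h]; omega
  rw [cycleGraph_adj', sub_eq_one, sub_eq_one]
  omega

def cycleGraphEmbeddingOfApex {n : ℕ} (p : pathGraph (n + 1) ↪g G) (x : V)
    (hx : x ∉ Set.range p) (hadj : ∀ i, G.Adj x (p i) ↔ i = 0 ∨ i = Fin.last n) :
    cycleGraph (n + 2) ↪g G where
  toFun := Fin.lastCases x p
  inj' := by
    intro i j hij
    induction i using Fin.lastCases <;> induction j using Fin.lastCases <;>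
      simp_all [eq_comm (a := x)]
  map_rel_iff' := by
    intro i j
    change G.Adj (Fin.lastCases x p i) (Fin.lastCases x p j) ↔ _
    rw [cycleGraph_adj_iff_val]
    induction i using Fin.lastCases <;> induction j using Fin.lastCases
    · simp
    · simp only [Fin.lastCases_last, Fin.lastCases_castSucc, hadj, Fin.ext_iff]
      simp; omega
    · simp only [Fin.lastCases_last, Fin.lastCases_castSucc, G.adj_comm _ x, hadj, Fin.ext_iff]
      simp; omega
    · simp only [Fin.lastCases_castSucc, p.map_adj_iff, pathGraph_adj]
      simp; omega

theorem Walk.eq_add_one_of_adj_getVert_of_length_eq_dist {u v : V} {w : G.Walk u v}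
    (hw : w.length = G.dist u v) {i j : ℕ} (hij : i < j) (hj : j ≤ w.length)
    (hadj : G.Adj (w.getVert i) (w.getVert j)) : j = i + 1 := by
  have := G.dist_le ((w.take i).append (.cons hadj (w.drop j)))
  simp only [Walk.length_append, Walk.length_cons, Walk.take_length, Walk.drop_length] at this
  omega

def Walk.pathGraphEmbedding {u v : V} (w : G.Walk u v) (hw : w.length = G.dist u v) :
    pathGraph (w.length + 1) ↪g G where
  toFun i := w.getVert i
  inj' i j hij := Fin.ext <| (w.isPath_of_length_eq_dist hw).getVert_injOn
    (Nat.lt_succ_iff.mp i.isLt) (Nat.lt_succ_iff.mp j.isLt) hij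
  map_rel_iff' {i j} := by
    change G.Adj (w.getVert i) (w.getVert j) ↔ _
    rw [pathGraph_adj]
    constructor
    · intro h
      rcases lt_trichotomy i.val j.val with hlt | heq | hgt
      · exact .inl (w.eq_add_one_of_adj_getVert_of_length_eq_dist hw hlt (by omega) h).symm
      · exact absurd (Fin.ext heq ▸ h) (G.irrefl)
      · exact .inr (w.eq_add_one_of_adj_getVert_of_length_eq_dist hw hgt (by omega) h.symm).symm
    · rintro (h | h)
      · simpa [← h] using w.adj_getVert_succ (i := i) (by omega)
      · simpa [← h] using (w.adj_getVert_succ (i := j) (by omega)).symm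

def Chordal (G : SimpleGraph V) : Prop :=
  ∀ m, 4 ≤ m → IsEmpty (cycleGraph m ↪g G)

theorem Chordal.adj_of_adj_of_connected (hG : G.Chordal) {C : Set V}
    (hC : (G.induce C).Connected) {v x y : V} (hv : v ∉ C) (hvC : ∀ c ∈ C, ¬G.Adj v c)
    (hxy : x ≠ y) (hvx : G.Adj v x) (hvy : G.Adj v y) (hxC : ∃ c ∈ C, G.Adj x c)
    (hyC : ∃ c ∈ C, G.Adj y c) : G.Adj x y := by
  by_contra hnxy
  obtain ⟨c, hc, hxc⟩ := hxC
  obtain ⟨d, hd, hyd⟩ := hyC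
  set R : Set V := insert x (insert y C)
  have hCR : C ⊆ R := fun z hz => .inr (.inr hz)
  let x' : R := ⟨x, .inl rfl⟩
  let y' : R := ⟨y, .inr (.inl rfl)⟩
  have hreach : (G.induce R).Reachable x' y' := by
    have hcd := (hC.preconnected ⟨c, hc⟩ ⟨d, hd⟩).map (induceHomOfLE G hCR).toHom
    exact (Adj.reachable (v := ⟨c, hCR hc⟩) hxc).trans
      (hcd.trans (Adj.reachable (G := G.induce R) (u := ⟨d, hCR hd⟩) (v := y') hyd.symm))
  obtain ⟨w, hw⟩ := hreach.exists_walk_length_eq_dist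
  have hlen : 1 < w.length :=
    hw ▸ hreach.one_lt_dist_of_ne_of_not_adj (fun h => hxy (congrArg Subtype.val h)) hnxy
  let p := (Embedding.induce R).comp (w.pathGraphEmbedding hw)
  have hp0 : p 0 = x := congrArg Subtype.val w.getVert_zero
  have hpl : p (Fin.last _) = y := congrArg Subtype.val w.getVert_length
  have hpR : ∀ i, p i ∈ R := fun i => (w.getVert i).2
  have hpC : ∀ i, i ≠ 0 → i ≠ Fin.last _ → p i ∈ C := by
    intro i hi0 hil
    rcases hpR i with h | h | h
    · exact absurd (p.injective (h.trans hp0.symm)) hi0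
    · exact absurd (p.injective (h.trans hpl.symm)) hil
    · exact h
  have hvR : v ∉ R := by
    rintro (h | h | h)
    exacts [hvx.ne h, hvy.ne h, hv h]
  refine (hG (w.length + 2) (by omega)).false (cycleGraphEmbeddingOfApex p v ?_ fun i => ?_)
  · rintro ⟨i, hi⟩
    exact hvR (hi ▸ hpR i)
  · refine ⟨fun h => ?_, ?_⟩
    · by_contra hi
      rw [not_or] at hi
      exact hvC _ (hpC i hi.1 hi.2) h
    · rintro (rfl | rfl)
      exacts [hp0 ▸ hvx, hpl ▸ hvy]

theorem exists_closed_connected_induce_subset [Finite V] (G : SimpleGraph V) {D : Set V}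
    {u : V} (hu : u ∈ D) :
    ∃ C ⊆ D, u ∈ C ∧ (G.induce C).Connected ∧ ∀ c ∈ C, ∀ z ∈ D, G.Adj c z → z ∈ C := by
  have hsingle : ∀ z : V, (G.induce {z}).Connected := fun z => by
    rw [induce_singleton_eq_top]; exact connected_top
  obtain ⟨C, huC, hmax⟩ :=
    (Set.toFinite {C : Set V | C ⊆ D ∧ (G.induce C).Connected}).exists_le_maximal
      (a := {u}) ⟨Set.singleton_subset_iff.mpr hu, hsingle u⟩
  refine ⟨C, hmax.prop.1, huC rfl, hmax.prop.2, fun c hc z hz hcz => ?_⟩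
  have hCz : C ∪ {z} ⊆ C := hmax.le_of_ge
    ⟨Set.union_subset hmax.prop.1 (Set.singleton_subset_iff.mpr hz),
      connected_induce_union hmax.prop.2.preconnected (hsingle z).preconnected hc rfl hcz⟩
    Set.subset_union_left
  exact hCz (.inr rfl)

def IsSimplicialIn (G : SimpleGraph V) (W : Set V) (v : V) : Prop :=
  G.IsClique (G.neighborSet v ∩ W)

theorem exists_isSimplicialIn_of_dichotomy {W W' D : Set V} (hD : D.Nonempty)
    (hnbr : ∀ d ∈ D, G.neighborSet d ∩ W ⊆ W') (hS : G.IsClique (W' \ D))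
    (hW' : G.IsClique W' ∨ ∃ a ∈ W', ∃ b ∈ W', a ≠ b ∧ ¬G.Adj a b ∧
      G.IsSimplicialIn W' a ∧ G.IsSimplicialIn W' b) :
    ∃ d ∈ D, G.IsSimplicialIn W d := by
  have lift : ∀ d ∈ D, G.IsSimplicialIn W' d → G.IsSimplicialIn W d := fun d hd h =>
    IsClique.subset (s := G.neighborSet d ∩ W') (fun z hz => ⟨hz.1, hnbr d hd hz⟩) h
  rcases hW' with hcl | ⟨a, ha, b, hb, hab, hnab, hsa, hsb⟩
  · obtain ⟨d, hd⟩ := hD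
    exact ⟨d, hd, lift d hd (hcl.subset Set.inter_subset_right)⟩
  · by_cases haD : a ∈ D
    · exact ⟨a, haD, lift a haD hsa⟩
    by_cases hbD : b ∈ D
    · exact ⟨b, hbD, lift b hbD hsb⟩
    exact absurd (hS (show a ∈ W' \ D from ⟨ha, haD⟩) ⟨hb, hbD⟩ hab) hnab

theorem Chordal.isClique_boundary_of_component (hG : G.Chordal) {W C : Set V} {v : V}
    (hCW : C ⊆ W \ insert v (G.neighborSet v)) (hC : (G.induce C).Connected)
    (hC_closed : ∀ c ∈ C, ∀ z ∈ W \ insert v (G.neighborSet v), G.Adj c z → z ∈ C) :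
    G.IsClique {z | z ∈ W ∧ z ∉ C ∧ ∃ c ∈ C, G.Adj z c} := by
  have hvC : ∀ c ∈ C, ¬G.Adj v c := fun c hc h => (hCW hc).2 (.inr h)
  have hv : ∀ z ∈ W, z ∉ C → ∀ c ∈ C, G.Adj z c → G.Adj v z := by
    intro z hzW hzC c hc hzc
    by_contra hvz
    refine hzC (hC_closed c hc z ⟨hzW, ?_⟩ hzc.symm)
    rintro (rfl | h)
    exacts [hvC c hc hzc, hvz h]
  rintro x ⟨hxW, hxC, hx⟩ y ⟨hyW, hyC, hy⟩ hxy
  obtain ⟨c, hc, hxc⟩ := hx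
  obtain ⟨d, hd, hyd⟩ := hy
  exact hG.adj_of_adj_of_connected hC (fun h => (hCW h).2 (.inl rfl)) hvC hxy
    (hv x hxW hxC c hc hxc) (hv y hyW hyC d hd hyd) ⟨c, hc, hxc⟩ ⟨d, hd, hyd⟩

theorem Chordal.isClique_or_exists_isSimplicialIn [Finite V] (hG : G.Chordal) (W : Set V) :
    G.IsClique W ∨ ∃ a ∈ W, ∃ b ∈ W, a ≠ b ∧ ¬G.Adj a b ∧
      G.IsSimplicialIn W a ∧ G.IsSimplicialIn W b := by
  induction W using WellFoundedLT.induction with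
  | _ W ih =>
  by_cases hW : G.IsClique W
  · exact .inl hW
  right
  obtain ⟨v, hv, u, hu, hvu, hnvu⟩ : ∃ v ∈ W, ∃ u ∈ W, v ≠ u ∧ ¬G.Adj v u := by
    simpa [IsClique, Set.Pairwise] using hW
  have huD : u ∈ W \ insert v (G.neighborSet v) :=
    ⟨hu, by rintro (h | h); exacts [hvu h.symm, hnvu h]⟩
  obtain ⟨C, hCD, huC, hC, hC_closed⟩ := exists_closed_connected_induce_subset G huD
  set S := {z | z ∈ W ∧ z ∉ C ∧ ∃ c ∈ C, G.Adj z c}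
  have hS : G.IsClique S := hG.isClique_boundary_of_component hCD hC hC_closed
  have hvCS : v ∉ C ∪ S := by
    rintro (h | ⟨-, -, c, hc, hvc⟩)
    exacts [(hCD h).2 (.inl rfl), (hCD hc).2 (.inr hvc)]
  have hCS : C ∪ S ⊂ W := (Set.ssubset_iff_of_subset
    (Set.union_subset (fun c hc => (hCD hc).1) fun z hz => hz.1)).mpr ⟨v, hv, hvCS⟩
  have hWC : W \ C ⊂ W :=
    (Set.ssubset_iff_of_subset Set.sdiff_subset).mpr ⟨u, hu, fun h => h.2 huC⟩
  obtain ⟨a, haC, ha⟩ := exists_isSimplicialIn_of_dichotomy (W := W) (W' := C ∪ S) ⟨u, huC⟩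
    (fun c hc z ⟨hcz, hzW⟩ => by
      by_cases hzC : z ∈ C
      exacts [.inl hzC, .inr ⟨hzW, hzC, c, hc, hcz.symm⟩])
    (hS.subset fun z hz => hz.1.resolve_left hz.2) (ih _ hCS)
  have hSC : (W \ C) \ (W \ (C ∪ S)) ⊆ S := fun z ⟨⟨hzW, hzC⟩, hz⟩ => by
    by_contra h
    exact hz ⟨hzW, by rintro (h' | h'); exacts [hzC h', h h']⟩
  obtain ⟨b, hb, hb'⟩ := exists_isSimplicialIn_of_dichotomy (W := W) (W' := W \ C)
    (D := W \ (C ∪ S)) ⟨v, hv, hvCS⟩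
    (fun d hd z ⟨hdz, hzW⟩ =>
      ⟨hzW, fun hzC => hd.2 (.inr ⟨hd.1, fun hdC => hd.2 (.inl hdC), z, hzC, hdz⟩)⟩)
    (hS.subset hSC) (ih _ hWC)
  refine ⟨a, (hCD haC).1, b, hb.1, ?_, ?_, ha, hb'⟩
  · rintro rfl
    exact hb.2 (.inl haC)
  · intro hab
    exact hb.2 (.inr ⟨hb.1, fun h => hb.2 (.inl h), a, haC, hab.symm⟩)

theorem Chordal.exists_isSimplicialIn [Finite V] (hG : G.Chordal) {W : Set V} (hW : W.Nonempty) :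
    ∃ v ∈ W, G.IsSimplicialIn W v := by
  rcases hG.isClique_or_exists_isSimplicialIn W with hcl | ⟨a, ha, -, -, -, -, hsa, -⟩
  · obtain ⟨v, hv⟩ := hW
    exact ⟨v, hv, hcl.subset Set.inter_subset_right⟩
  · exact ⟨a, ha, hsa⟩

theorem IsSimplicialIn.card_le [DecidableRel G.Adj] {d : ℕ} (hfree : G.CliqueFree (d + 2))
    {W : Finset V} {v : V} (hv : G.IsSimplicialIn W v) : #{w ∈ W | G.Adj v w} ≤ d := by
  classical
  by_contra! hd
  obtain ⟨t, hts, ht⟩ := exists_subset_card_eq (s := {w ∈ W | G.Adj v w}) (n := d + 1) hd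
  have hnbr : ∀ w ∈ t, G.Adj v w ∧ w ∈ W := fun w hw => (mem_filter.mp (hts hw)).symm
  have htc : G.IsNClique (d + 1) t := ⟨hv.subset fun w hw => hnbr w hw, ht⟩
  exact hfree _ (htc.insert fun w hw => (hnbr w hw).1)

theorem card_edgeFinset_le_of_degenerate [Fintype V] [DecidableEq V] [DecidableRel G.Adj]
    (d : ℕ) (h : ∀ W : Finset V, W.Nonempty → ∃ v ∈ W, #{w ∈ W | G.Adj v w} ≤ d) :
    #G.edgeFinset ≤ d * Fintype.card V := by
  suffices key : ∀ W : Finset V, #(G.edgeFinset ∩ W.sym2) ≤ d * #W by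
    simpa using key univ
  intro W
  induction W using Finset.strongInduction with
  | H W ih =>
  rcases W.eq_empty_or_nonempty with rfl | hW
  · simp
  obtain ⟨v, hv, hdeg⟩ := h W hW
  have hsub : G.edgeFinset ∩ W.sym2 ⊆
      G.edgeFinset ∩ (W.erase v).sym2 ∪ {w ∈ W | G.Adj v w}.image (fun w => s(v, w)) := by
    rintro ⟨a, b⟩ he
    simp only [mem_inter, mem_edgeFinset, mem_edgeSet, mk_mem_sym2_iff] at he
    obtain ⟨hab, ha, hb⟩ := he
    simp only [mem_union, mem_inter, mem_edgeFinset, mem_edgeSet, mk_mem_sym2_iff, mem_erase,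
      mem_image, mem_filter]
    by_cases hav : a = v
    · subst hav
      exact .inr ⟨b, ⟨hb, hab⟩, rfl⟩
    by_cases hbv : b = v
    · subst hbv
      exact .inr ⟨a, ⟨ha, hab.symm⟩, Sym2.eq_swap⟩
    exact .inl ⟨hab, ⟨hav, ha⟩, hbv, hb⟩
  obtain ⟨k, hk⟩ : ∃ k, #W = k + 1 := ⟨#W - 1, by have := card_pos.mpr hW; omega⟩
  calc #(G.edgeFinset ∩ W.sym2)
      ≤ #(G.edgeFinset ∩ (W.erase v).sym2) + #{w ∈ W | G.Adj v w} :=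
        (card_le_card hsub).trans <|
          (card_union_le _ _).trans (Nat.add_le_add_left card_image_le _)
    _ ≤ d * #(W.erase v) + d := add_le_add (ih _ (erase_ssubset hv)) hdeg
    _ = d * #W := by rw [card_erase_of_mem hv, hk, Nat.add_sub_cancel]; ring

theorem Chordal.card_edgeFinset_le [Fintype V] [DecidableEq V] [DecidableRel G.Adj]
    (hG : G.Chordal) {d : ℕ} (hfree : G.CliqueFree (d + 2)) :
    #G.edgeFinset ≤ d * Fintype.card V :=
  card_edgeFinset_le_of_degenerate d fun W hW =>
    let ⟨v, hvW, hv⟩ := hG.exists_isSimplicialIn (W := (W : Set V)) hW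
    ⟨v, hvW, hv.card_le hfree⟩

end SimpleGraph

theorem stmt18_general {V : Type*} [Fintype V] (G : SimpleGraph V) (s : ℕ)
    (hfree : G.CliqueFree (s + 2)) (H : SimpleGraph V) (hHG : H ≤ G)
    (hchordal : ∀ m : ℕ, 4 ≤ m → IsEmpty (SimpleGraph.cycleGraph m ↪g H)) :
    H.edgeSet.ncard ≤ s * Fintype.card V := by
  classical
  rw [← H.coe_edgeFinset, Set.ncard_coe_finset]
  exact SimpleGraph.Chordal.card_edgeFinset_le hchordal (hfree.anti hHG)

/-- If a finite graph `G` has no clique on `s + 2` vertices, then every chordal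
subgraph `H` of `G` on `n` vertices (where `n` is the number of vertices of `G`)
has at most `s · n` edges. Chordality is expressed as having no induced cycle of
length at least 4. -/
theorem stmt18 {V : Type*} [Fintype V] (G : SimpleGraph V) (s : ℕ) (hs : 0 < s)
    (hfree : G.CliqueFree (s + 2)) (H : SimpleGraph V) (hHG : H ≤ G)
    (hchordal : ∀ m : ℕ, 4 ≤ m → IsEmpty (SimpleGraph.cycleGraph m ↪g H)) :
    H.edgeSet.ncard ≤ s * Fintype.card V :=
  stmt18_general G s hfree H hHG hchordal
end
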